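/- arXiv:1306.6545 — 3 statements merged into one kernel-verified Lean document; each statement's English description precedes it below -/
import Mathlib

section
/- Let E be a complete separable metric space, μ a Borel probability measure on E, and Φ a nonempty family of continuous functions from E to ℝ whose pointwise infimum φ*(x) := inf{φ(x) : φ ∈ Φ} is real-valued and continuous on E. Then there exists a sequence (φ_n)_{n∈ℕ} in Φ such that φ*(x) = inf_{n∈ℕ} φ_n(x) for μ-almost every x ∈ E. -/
open MeasureTheory

/-- On a complete separable metric space with a Borel probability measure `μ`, a nonempty
family `Φ` of continuous real-valued functions whose pointwise infimum `φs` is real-valued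
and continuous admits a countable subfamily realizing the infimum `μ`-almost everywhere. -/
theorem stmt1 {E : Type*} [MetricSpace E] [CompleteSpace E]
    [TopologicalSpace.SeparableSpace E] [MeasurableSpace E] [BorelSpace E]
    (μ : Measure E) [IsProbabilityMeasure μ]
    (Φ : Set (E → ℝ)) (hΦne : Φ.Nonempty)
    (hcont : ∀ φ ∈ Φ, Continuous φ)
    (φs : E → ℝ) (hglb : ∀ x, IsGLB ((fun φ : E → ℝ => φ x) '' Φ) (φs x))
    (hφscont : Continuous φs) :
    ∃ φ : ℕ → E → ℝ, (∀ n, φ n ∈ Φ) ∧ ∀ᵐ x ∂μ, φs x = ⨅ n, φ n x := by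
  obtain ⟨φ0, hφ0⟩ := hΦne
  have key : ∀ k : ℕ, ∃ T : Set (E → ℝ), T.Countable ∧ T ⊆ Φ ∧
      ∀ x : E, ∃ φ ∈ T, φ x < φs x + 1 / (k + 1) := by
    intro k
    have hpos : (0 : ℝ) < 1 / (k + 1) := by positivity
    set s : Φ → Set E := fun φ => {x | φ.1 x < φs x + 1 / (k + 1)} with hs
    have hopen : ∀ φ : Φ, IsOpen (s φ) :=
      fun φ => isOpen_lt (hcont φ.1 φ.2) (hφscont.add continuous_const)
    obtain ⟨T, hTc, hTeq⟩ := TopologicalSpace.isOpen_iUnion_countable s hopen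
    refine ⟨Subtype.val '' T, hTc.image _, ?_, ?_⟩
    · rintro _ ⟨φ, -, rfl⟩; exact φ.2
    · intro x
      have hx : x ∈ ⋃ φ, s φ := by
        have hlt : φs x < φs x + 1 / (k + 1) := by linarith
        obtain ⟨c, hc, hclt⟩ := (hglb x).exists_between hlt
        obtain ⟨φ, hφΦ, rfl⟩ := hc
        exact Set.mem_iUnion.2 ⟨⟨φ, hφΦ⟩, hclt.2⟩
      rw [← hTeq] at hx
      obtain ⟨φ, hφT, hφx⟩ := Set.mem_iUnion₂.1 hx
      exact ⟨φ.1, ⟨φ, hφT, rfl⟩, hφx⟩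
  choose T hTc hTΦ hT using key
  set S : Set (E → ℝ) := insert φ0 (⋃ k, T k) with hS
  have hSc : S.Countable := (Set.countable_iUnion hTc).insert _
  have hSΦ : S ⊆ Φ := by
    rintro φ (rfl | hφ)
    · exact hφ0
    · obtain ⟨k, hk⟩ := Set.mem_iUnion.1 hφ
      exact hTΦ k hk
  obtain ⟨f, hf⟩ := hSc.exists_eq_range ⟨φ0, Set.mem_insert _ _⟩
  have hfΦ : ∀ n, f n ∈ Φ := fun n => hSΦ (hf ▸ Set.mem_range_self n)
  refine ⟨f, hfΦ, ae_of_all μ fun x => ?_⟩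
  have hlb : ∀ n, φs x ≤ f n x := fun n =>
    (hglb x).1 ⟨f n, hfΦ n, rfl⟩
  have hbdd : BddBelow (Set.range fun n => f n x) := ⟨φs x, by rintro _ ⟨n, rfl⟩; exact hlb n⟩
  refine le_antisymm (le_ciInf hlb) ?_
  refine le_of_forall_pos_le_add fun ε hε => ?_
  obtain ⟨k, hk⟩ := exists_nat_one_div_lt hε
  obtain ⟨φ, hφT, hφx⟩ := hT k x
  have hφS : φ ∈ S := Set.mem_insert_iff.2 (Or.inr (Set.mem_iUnion.2 ⟨k, hφT⟩))
  rw [hf] at hφS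
  obtain ⟨n, rfl⟩ := hφS
  calc ⨅ m, f m x ≤ f n x := ciInf_le hbdd n
    _ ≤ φs x + 1 / (k + 1) := hφx.le
    _ ≤ φs x + ε := by linarith [hk]
end

section
/- Let E be a metric space, I a nonempty index set, and (μ_i)_{i∈I} a uniformly tight family of Borel probability measures on E, i.e., for every ε > 0 there is a compact set K ⊆ E with sup_{i∈I} μ_i(E \ K) ≤ ε. Let Φ be a nonempty family of continuous functions from E to ℝ that is directed downward (for all φ, ψ ∈ Φ there exists χ ∈ Φ with χ(x) ≤ min(φ(x), ψ(x)) for all x ∈ E), and assume the pointwise infimum φ*(x) := inf{φ(x) : φ ∈ Φ} is real-valued and continuous on E. Then there exists a sequence (φ_n)_{n∈ℕ} in Φ with φ_{n+1} ≤ φ_n pointwise such that for every ε > 0, lim_{n→∞} sup_{i∈I} μ_i({x ∈ E : φ_n(x) − φ*(x) ≥ ε}) = 0. -/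
/-!
Dini's theorem makes the downward-directed family `Φ` converge to its infimum `φs` uniformly on
every compact set. Tightness gives compacts `K n` with `sup_i μ i (K n)ᶜ ≤ 1/n`, and descending
recursively through `Φ` we pick `φ n ≤ φ (n - 1)` within `1/(n+1)` of `φs` on `K n`. For `n`
large the set `{ε ≤ φ n - φs}` then misses `K n`, so its capacity is at most `1/n`.
-/

open MeasureTheory Filter Topology OrderDual

section Dini

variable {E : Type*} [TopologicalSpace E] {Φ : Set (E → ℝ)} {φs : E → ℝ}

/-- Dini's theorem for the family `Φ` indexed by itself; the order is reversed so that `atTop`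
runs down the family. -/
theorem tendstoUniformlyOn_of_isGLB (hcont : ∀ φ ∈ Φ, Continuous φ)
    (hglb : ∀ x, IsGLB ((fun φ : E → ℝ => φ x) '' Φ) (φs x))
    (hφs : Continuous φs) {K : Set E} (hK : IsCompact K) :
    TendstoUniformlyOn (fun φ : (↥Φ)ᵒᵈ => ((ofDual φ : ↥Φ) : E → ℝ)) φs atTop K := by
  refine Antitone.tendstoUniformlyOn_of_forall_tendsto hK
    (fun φ => (hcont _ (ofDual φ).2).continuousOn) (fun x _ _ _ h => h x) hφs.continuousOn
    fun x _ => tendsto_atTop_isGLB (fun _ _ h => h x) ?_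
  have hrange :
      Set.range (fun φ : (↥Φ)ᵒᵈ => (ofDual φ : ↥Φ).1 x) = (fun φ : E → ℝ => φ x) '' Φ :=
    Set.ext fun _ =>
      ⟨fun ⟨φ, hφ⟩ => ⟨_, (ofDual φ).2, hφ⟩, fun ⟨φ, hφ, hy⟩ => ⟨toDual ⟨φ, hφ⟩, hy⟩⟩
  exact hrange ▸ hglb x

theorem exists_mem_le_forall_sub_lt_of_isCompact (hcont : ∀ φ ∈ Φ, Continuous φ)
    (hdir : DirectedOn (· ≥ ·) Φ) (hglb : ∀ x, IsGLB ((fun φ : E → ℝ => φ x) '' Φ) (φs x))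
    (hφs : Continuous φs) {K : Set E} (hK : IsCompact K) {g : E → ℝ} (hg : g ∈ Φ)
    {δ : ℝ} (hδ : 0 < δ) : ∃ f ∈ Φ, f ≤ g ∧ ∀ x ∈ K, f x - φs x < δ := by
  have : Nonempty (↥Φ)ᵒᵈ := ⟨toDual ⟨g, hg⟩⟩
  have : IsDirectedOrder (↥Φ)ᵒᵈ := ⟨fun a b => by
    obtain ⟨c, hc, hca, hcb⟩ := hdir _ (ofDual a).2 _ (ofDual b).2
    exact ⟨toDual ⟨c, hc⟩, hca, hcb⟩⟩
  have hunif := Metric.tendstoUniformlyOn_iff.1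
    (tendstoUniformlyOn_of_isGLB hcont hglb hφs hK) δ hδ
  obtain ⟨φ, hφg, hφK⟩ := ((eventually_ge_atTop (toDual ⟨g, hg⟩)).and hunif).exists
  refine ⟨_, (ofDual φ).2, hφg, fun x hx => ?_⟩
  have := hφK x hx
  rw [Real.dist_eq, abs_sub_comm] at this
  exact (le_abs_self _).trans_lt this

end Dini

theorem exists_antitone_seq_of_forall_exists_le {α : Type*} [Preorder α] {S : Set α}
    (hS : S.Nonempty) {P : ℕ → α → Prop} (h : ∀ n, ∀ a ∈ S, ∃ b ∈ S, b ≤ a ∧ P n b) :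
    ∃ u : ℕ → α, (∀ n, u n ∈ S) ∧ Antitone u ∧ ∀ n, P n (u n) := by
  choose! F hFS hFle hFP using h
  obtain ⟨a, ha⟩ := hS
  let u : ℕ → α := fun n => Nat.rec (F 0 a) (fun k b => F (k + 1) b) n
  have hu : ∀ n, u n ∈ S := fun n => by
    induction n with
    | zero => exact hFS 0 a ha
    | succ k ih => exact hFS (k + 1) (u k) ih
  refine ⟨u, hu, antitone_nat_of_succ_le fun n => hFle (n + 1) (u n) (hu n), fun n => ?_⟩
  cases n with
  | zero => exact hFP 0 a ha
  | succ k => exact hFP (k + 1) (u k) (hu k)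

theorem tendsto_iSup_measure_of_eventually_subset_compl {E I : Type*} [MeasurableSpace E]
    {μ : I → Measure E} {A K : ℕ → Set E}
    (hK : Tendsto (fun n => ⨆ i, μ i (K n)ᶜ) atTop (𝓝 0)) (hA : ∀ᶠ n in atTop, A n ⊆ (K n)ᶜ) :
    Tendsto (fun n => ⨆ i, μ i (A n)) atTop (𝓝 0) :=
  tendsto_of_tendsto_of_tendsto_of_le_of_le' tendsto_const_nhds hK
    (Eventually.of_forall fun _ => zero_le)
    (hA.mono fun _ hn => iSup_mono fun _ => measure_mono hn)

theorem stmt2_general {E : Type*} [MetricSpace E] [MeasurableSpace E]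
    {I : Type*}
    (μ : I → Measure E)
    (htight : ∀ ε : ENNReal, 0 < ε → ∃ K : Set E, IsCompact K ∧ ⨆ i, μ i Kᶜ ≤ ε)
    (Φ : Set (E → ℝ)) (hΦne : Φ.Nonempty)
    (hcont : ∀ φ ∈ Φ, Continuous φ)
    (hdir : ∀ φ ∈ Φ, ∀ ψ ∈ Φ, ∃ χ ∈ Φ, ∀ x, χ x ≤ min (φ x) (ψ x))
    (φs : E → ℝ) (hglb : ∀ x, IsGLB ((fun φ : E → ℝ => φ x) '' Φ) (φs x))
    (hφscont : Continuous φs) :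
    ∃ φ : ℕ → E → ℝ, (∀ n, φ n ∈ Φ) ∧ (∀ n x, φ (n + 1) x ≤ φ n x) ∧
      ∀ ε : ℝ, 0 < ε →
        Tendsto (fun n => ⨆ i, μ i {x | ε ≤ φ n x - φs x}) atTop (nhds 0) := by
  have hdirected : DirectedOn (· ≥ ·) Φ := fun φ hφ ψ hψ => by
    obtain ⟨χ, hχ, hle⟩ := hdir φ hφ ψ hψ
    exact ⟨χ, hχ, fun x => (hle x).trans (min_le_left _ _),
      fun x => (hle x).trans (min_le_right _ _)⟩
  choose K hKc hKμ using fun n : ℕ =>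
    htight (n : ENNReal)⁻¹ (ENNReal.inv_pos.2 (ENNReal.natCast_ne_top n))
  obtain ⟨φ, hφΦ, hφanti, hφK⟩ := exists_antitone_seq_of_forall_exists_le hΦne fun n g hg =>
    exists_mem_le_forall_sub_lt_of_isCompact hcont hdirected hglb hφscont (hKc n) hg
      (Nat.one_div_pos_of_nat (n := n) : (0 : ℝ) < 1 / (n + 1))
  refine ⟨φ, hφΦ, fun n => hφanti n.le_succ, fun ε hε => ?_⟩
  have hKsmall : Tendsto (fun n => ⨆ i, μ i (K n)ᶜ) atTop (𝓝 0) :=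
    tendsto_of_tendsto_of_tendsto_of_le_of_le tendsto_const_nhds
      ENNReal.tendsto_inv_nat_nhds_zero (fun _ => zero_le) hKμ
  refine tendsto_iSup_measure_of_eventually_subset_compl hKsmall ?_
  filter_upwards [tendsto_one_div_add_atTop_nhds_zero_nat.eventually (gt_mem_nhds hε)]
    with n hn x hx hxK
  exact (lt_irrefl ε) (hx.trans_lt ((hφK n x hxK).trans hn))

/-- For a uniformly tight family `(μ i)` of Borel probability measures on a metric space and
a nonempty downward-directed family `Φ` of continuous functions with real-valued continuous
pointwise infimum `φs`, there is a pointwise decreasing sequence `(φ n)` in `Φ` converging to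
`φs` in capacity: for every `ε > 0`, `sup_i μ_i {φ n - φs ≥ ε} → 0`. -/
theorem stmt2 {E : Type*} [MetricSpace E] [MeasurableSpace E] [BorelSpace E]
    {I : Type*} [Nonempty I]
    (μ : I → Measure E) [∀ i, IsProbabilityMeasure (μ i)]
    (htight : ∀ ε : ENNReal, 0 < ε → ∃ K : Set E, IsCompact K ∧ ⨆ i, μ i Kᶜ ≤ ε)
    (Φ : Set (E → ℝ)) (hΦne : Φ.Nonempty)
    (hcont : ∀ φ ∈ Φ, Continuous φ)
    (hdir : ∀ φ ∈ Φ, ∀ ψ ∈ Φ, ∃ χ ∈ Φ, ∀ x, χ x ≤ min (φ x) (ψ x))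
    (φs : E → ℝ) (hglb : ∀ x, IsGLB ((fun φ : E → ℝ => φ x) '' Φ) (φs x))
    (hφscont : Continuous φs) :
    ∃ φ : ℕ → E → ℝ, (∀ n, φ n ∈ Φ) ∧ (∀ n x, φ (n + 1) x ≤ φ n x) ∧
      ∀ ε : ℝ, 0 < ε →
        Tendsto (fun n => ⨆ i, μ i {x | ε ≤ φ n x - φs x}) atTop (nhds 0) :=
  stmt2_general μ htight Φ hΦne hcont hdir φs hglb hφscont
end

section
/- Let E be a metric space, I a nonempty index set, and (μ_i)_{i∈I} a uniformly tight family of Borel probability measures on E, i.e., for every ε > 0 there is a compact set K ⊆ E with sup_{i∈I} μ_i(E \ K) ≤ ε. Let Φ be a nonempty family of continuous functions from E to ℝ that is directed downward (for all φ, ψ ∈ Φ there exists χ ∈ Φ with χ(x) ≤ min(φ(x), ψ(x)) for all x ∈ E), and assume the pointwise infimum φ*(x) := inf{φ(x) : φ ∈ Φ} is real-valued and continuous on E. Suppose moreover that every function ψ ∈ Φ ∪ {φ*} satisfies the uniform integrability condition lim_{c→∞} sup_{i∈I} ∫_{{|ψ| ≥ c}} |ψ| dμ_i = 0. Then there exists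 a sequence (φ_n)_{n∈ℕ} in Φ with φ_{n+1} ≤ φ_n pointwise such that lim_{n→∞} sup_{i∈I} ∫_E (φ_n − φ*) dμ_i = 0. -/
open MeasureTheory Filter Topology
open scoped ENNReal

/-!
Indexing `Φ` by itself, ordered downwards, Dini's theorem makes `φ - φs` uniformly small on
any compact `K`. By tightness `Kᶜ` has uniformly small measure, and there the gap `χ - φs` of a
common minorant `χ` of such a `φ` and a fixed `ψ₀ ∈ Φ` is at most `|ψ₀| + |φs|`, whose integrals
over sets of small measure are uniformly small by uniform integrability. This gives members of
`Φ` with arbitrarily small upper expected gap, and directedness turns them into a decreasing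
sequence.
-/

lemma DirectedOn.exists_antitone_le {α : Type*} [Preorder α] {S : Set α}
    (hS : DirectedOn (· ≥ ·) S) {f : ℕ → α} (hf : ∀ n, f n ∈ S) :
    ∃ g : ℕ → α, (∀ n, g n ∈ S) ∧ Antitone g ∧ ∀ n, g n ≤ f n := by
  choose m hmS hm_left hm_right using hS
  let g : ℕ → S := fun n => Nat.rec ⟨f 0, hf 0⟩
    (fun n p => ⟨m p.1 p.2 (f (n + 1)) (hf _), hmS _ _ _ _⟩) n
  refine ⟨fun n => (g n).1, fun n => (g n).2,
    antitone_nat_of_succ_le fun n => hm_left _ _ _ _, fun n => ?_⟩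
  cases n with
  | zero => exact le_rfl
  | succ n => exact hm_right _ _ _ _

lemma exists_mem_lt_add_of_isCompact {α : Type*} [TopologicalSpace α] {Φ : Set (α → ℝ)}
    (hne : Φ.Nonempty) (hdir : DirectedOn (· ≥ ·) Φ) (hcont : ∀ φ ∈ Φ, Continuous φ)
    {f : α → ℝ} (hf : Continuous f) (hglb : ∀ x, IsGLB ((fun φ : α → ℝ => φ x) '' Φ) (f x))
    {K : Set α} (hK : IsCompact K) {ε : ℝ} (hε : 0 < ε) :
    ∃ φ ∈ Φ, ∀ x ∈ K, φ x < f x + ε := by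
  have : Nonempty Φᵒᵈ := hne.to_subtype
  have : IsDirected Φᵒᵈ (· ≤ ·) := ⟨fun a b => by
    obtain ⟨c, hc, hca, hcb⟩ := hdir _ (OrderDual.ofDual a).2 _ (OrderDual.ofDual b).2
    exact ⟨OrderDual.toDual ⟨c, hc⟩, hca, hcb⟩⟩
  let F : Φᵒᵈ → α → ℝ := fun a => (OrderDual.ofDual a : Φ)
  have hanti : Antitone F := fun a b hab => hab
  have hlim : ∀ x, Tendsto (F · x) atTop (𝓝 (f x)) := fun x =>
    tendsto_atTop_isGLB (fun a b hab => hanti hab x) (by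
      have hx := hglb x
      rwa [Set.image_eq_range] at hx)
  have hunif := Antitone.tendstoUniformlyOn_of_forall_tendsto hK
    (fun a => (hcont _ (OrderDual.ofDual a).2).continuousOn) (fun x _ a b hab => hanti hab x)
    hf.continuousOn (fun x _ => hlim x)
  obtain ⟨a, ha⟩ := (Metric.tendstoUniformlyOn_iff.1 hunif ε hε).exists
  refine ⟨F a, (OrderDual.ofDual a).2, fun x hx => ?_⟩
  have := ha x hx
  rw [Real.dist_eq, abs_lt] at this
  linarith [this.1]

section UniformIntegrability

variable {α ι : Type*} [MeasurableSpace α]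

lemma setLIntegral_ofReal_abs_le (ν : Measure α) (ψ : α → ℝ) (S : Set α) (c : ℝ) :
    ∫⁻ x in S, ENNReal.ofReal |ψ x| ∂ν
      ≤ ENNReal.ofReal c * ν S + ∫⁻ x in {x | c ≤ |ψ x|}, ENNReal.ofReal |ψ x| ∂ν := by
  set T := {x | c ≤ |ψ x|}
  have hpt : ∀ x, ENNReal.ofReal |ψ x|
      ≤ ENNReal.ofReal c + T.indicator (fun x => ENNReal.ofReal |ψ x|) x := by
    intro x
    by_cases hx : x ∈ T
    · simp [Set.indicator_of_mem hx]
    · simpa [Set.indicator_of_notMem hx] using ENNReal.ofReal_le_ofReal (not_le.1 hx).le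
  calc ∫⁻ x in S, ENNReal.ofReal |ψ x| ∂ν
      ≤ ∫⁻ x in S, (ENNReal.ofReal c + T.indicator (fun x => ENNReal.ofReal |ψ x|) x) ∂ν :=
        lintegral_mono hpt
    _ = ENNReal.ofReal c * ν S + ∫⁻ x in S, T.indicator (fun x => ENNReal.ofReal |ψ x|) x ∂ν := by
        rw [lintegral_add_left measurable_const, setLIntegral_const]
    _ ≤ ENNReal.ofReal c * ν S + ∫⁻ x in T, ENNReal.ofReal |ψ x| ∂ν := by
        exact add_le_add le_rfl
          ((setLIntegral_le_lintegral _ _).trans (lintegral_indicator_le _ _))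

lemma exists_pos_forall_setLIntegral_ofReal_abs_le {μ : ι → Measure α} {ψ : α → ℝ}
    (hUI : Tendsto (fun c : ℝ =>
      ⨆ i, ∫⁻ x in {x | c ≤ |ψ x|}, ENNReal.ofReal |ψ x| ∂(μ i)) atTop (𝓝 0))
    {ε : ℝ≥0∞} (hε : 0 < ε) :
    ∃ δ > 0, ∀ S i, μ i S ≤ δ → ∫⁻ x in S, ENNReal.ofReal |ψ x| ∂(μ i) ≤ ε := by
  obtain ⟨c, hc⟩ := (hUI.eventually_lt_const (ENNReal.half_pos hε.ne')).exists
  refine ⟨ε / 2 / ENNReal.ofReal c,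
    ENNReal.div_pos_iff.2 ⟨(ENNReal.half_pos hε.ne').ne', ENNReal.ofReal_ne_top⟩,
    fun S i hS => ?_⟩
  calc ∫⁻ x in S, ENNReal.ofReal |ψ x| ∂(μ i)
      ≤ ENNReal.ofReal c * μ i S + ∫⁻ x in {x | c ≤ |ψ x|}, ENNReal.ofReal |ψ x| ∂(μ i) :=
        setLIntegral_ofReal_abs_le _ _ _ _
    _ ≤ ENNReal.ofReal c * (ε / 2 / ENNReal.ofReal c) + ε / 2 := by
        gcongr
        exact (le_iSup (fun i => ∫⁻ x in {x | c ≤ |ψ x|}, ENNReal.ofReal |ψ x| ∂(μ i)) i).trans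
          hc.le
    _ ≤ ε / 2 + ε / 2 := by gcongr; exact ENNReal.mul_div_le
    _ = ε := ENNReal.add_halves ε

end UniformIntegrability

lemma exists_mem_forall_lintegral_ofReal_sub_le {E I : Type*} [TopologicalSpace E]
    [MeasurableSpace E] [OpensMeasurableSpace E]
    (μ : I → Measure E) [∀ i, IsProbabilityMeasure (μ i)]
    (htight : ∀ ε : ℝ≥0∞, 0 < ε → ∃ K : Set E, IsCompact K ∧ ⨆ i, μ i Kᶜ ≤ ε)
    {Φ : Set (E → ℝ)} (hdir : DirectedOn (· ≥ ·) Φ) (hcont : ∀ φ ∈ Φ, Continuous φ)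
    {φs : E → ℝ} (hglb : ∀ x, IsGLB ((fun φ : E → ℝ => φ x) '' Φ) (φs x))
    (hφscont : Continuous φs) {ψ₀ : E → ℝ} (hψ₀ : ψ₀ ∈ Φ)
    (hUIψ₀ : Tendsto (fun c : ℝ =>
      ⨆ i, ∫⁻ x in {x | c ≤ |ψ₀ x|}, ENNReal.ofReal |ψ₀ x| ∂(μ i)) atTop (𝓝 0))
    (hUIφs : Tendsto (fun c : ℝ =>
      ⨆ i, ∫⁻ x in {x | c ≤ |φs x|}, ENNReal.ofReal |φs x| ∂(μ i)) atTop (𝓝 0))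
    {ε : ℝ≥0∞} (hε : 0 < ε) :
    ∃ χ ∈ Φ, ∀ i, ∫⁻ x, ENNReal.ofReal (χ x - φs x) ∂(μ i) ≤ ε := by
  have hε3 : 0 < ε / 3 := ENNReal.div_pos hε.ne' ENNReal.ofNat_ne_top
  obtain ⟨δ₁, hδ₁, hψ₀S⟩ := exists_pos_forall_setLIntegral_ofReal_abs_le hUIψ₀ hε3
  obtain ⟨δ₂, hδ₂, hφsS⟩ := exists_pos_forall_setLIntegral_ofReal_abs_le hUIφs hε3
  obtain ⟨K, hK, hKc⟩ := htight (min δ₁ δ₂) (lt_min hδ₁ hδ₂)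
  obtain ⟨η, -, hη0, hηε⟩ := ENNReal.lt_iff_exists_real_btwn.1 hε3
  obtain ⟨φ₁, hφ₁, hφ₁K⟩ :=
    exists_mem_lt_add_of_isCompact ⟨ψ₀, hψ₀⟩ hdir hcont hφscont hglb hK (ENNReal.ofReal_pos.1 hη0)
  obtain ⟨χ, hχ, hχφ₁, hχψ₀⟩ := hdir φ₁ hφ₁ ψ₀ hψ₀
  refine ⟨χ, hχ, fun i => ?_⟩
  have hμKc : μ i Kᶜ ≤ min δ₁ δ₂ := (le_iSup (fun i => μ i Kᶜ) i).trans hKc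
  have hon : ∫⁻ x in K, ENNReal.ofReal (χ x - φs x) ∂(μ i) ≤ ε / 3 :=
    calc ∫⁻ x in K, ENNReal.ofReal (χ x - φs x) ∂(μ i)
        ≤ ∫⁻ _ in K, ENNReal.ofReal η ∂(μ i) := by
          refine setLIntegral_mono measurable_const fun x hx => ENNReal.ofReal_le_ofReal ?_
          linarith [hχφ₁ x, hφ₁K x hx]
      _ = ENNReal.ofReal η * μ i K := setLIntegral_const _ _
      _ ≤ ε / 3 := (mul_le_of_le_one_right' prob_le_one).trans hηε.le
  have hoff : ∫⁻ x in Kᶜ, ENNReal.ofReal (χ x - φs x) ∂(μ i) ≤ ε / 3 + ε / 3 :=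
    calc ∫⁻ x in Kᶜ, ENNReal.ofReal (χ x - φs x) ∂(μ i)
        ≤ ∫⁻ x in Kᶜ, (ENNReal.ofReal |ψ₀ x| + ENNReal.ofReal |φs x|) ∂(μ i) := by
          refine lintegral_mono fun x => ?_
          rw [← ENNReal.ofReal_add (abs_nonneg _) (abs_nonneg _)]
          refine ENNReal.ofReal_le_ofReal ?_
          linarith [hχψ₀ x, le_abs_self (ψ₀ x), neg_abs_le (φs x)]
      _ = ∫⁻ x in Kᶜ, ENNReal.ofReal |ψ₀ x| ∂(μ i) + ∫⁻ x in Kᶜ, ENNReal.ofReal |φs x| ∂(μ i) :=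
          lintegral_add_left (hcont ψ₀ hψ₀).abs.measurable.ennreal_ofReal _
      _ ≤ ε / 3 + ε / 3 :=
          add_le_add (hψ₀S _ i (hμKc.trans (min_le_left _ _)))
            (hφsS _ i (hμKc.trans (min_le_right _ _)))
  calc ∫⁻ x, ENNReal.ofReal (χ x - φs x) ∂(μ i)
      = ∫⁻ x in K ∪ Kᶜ, ENNReal.ofReal (χ x - φs x) ∂(μ i) := by
        rw [Set.union_compl_self, Measure.restrict_univ]
    _ ≤ ε / 3 + (ε / 3 + ε / 3) := (lintegral_union_le _ _ _).trans (add_le_add hon hoff)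
    _ = ε := by rw [← add_assoc, ENNReal.add_thirds]

theorem stmt3_general {E : Type*} [MetricSpace E] [MeasurableSpace E] [BorelSpace E]
    {I : Type*}
    (μ : I → Measure E) [∀ i, IsProbabilityMeasure (μ i)]
    (htight : ∀ ε : ENNReal, 0 < ε → ∃ K : Set E, IsCompact K ∧ ⨆ i, μ i Kᶜ ≤ ε)
    (Φ : Set (E → ℝ)) (hΦne : Φ.Nonempty)
    (hcont : ∀ φ ∈ Φ, Continuous φ)
    (hdir : ∀ φ ∈ Φ, ∀ ψ ∈ Φ, ∃ χ ∈ Φ, ∀ x, χ x ≤ min (φ x) (ψ x))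
    (φs : E → ℝ) (hglb : ∀ x, IsGLB ((fun φ : E → ℝ => φ x) '' Φ) (φs x))
    (hφscont : Continuous φs)
    (hUI : ∀ ψ ∈ insert φs Φ,
      Tendsto (fun c : ℝ =>
          ⨆ i, ∫⁻ x in {x | c ≤ |ψ x|}, ENNReal.ofReal |ψ x| ∂(μ i)) atTop (nhds 0)) :
    ∃ φ : ℕ → E → ℝ, (∀ n, φ n ∈ Φ) ∧ (∀ n x, φ (n + 1) x ≤ φ n x) ∧
      Tendsto (fun n => ⨆ i, ∫⁻ x, ENNReal.ofReal (φ n x - φs x) ∂(μ i)) atTop (nhds 0) := by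
  have hdir' : DirectedOn (· ≥ ·) Φ := fun φ hφ ψ hψ =>
    (hdir φ hφ ψ hψ).imp fun χ ⟨hχ, hle⟩ =>
      ⟨hχ, fun x => (hle x).trans (min_le_left _ _), fun x => (hle x).trans (min_le_right _ _)⟩
  obtain ⟨ψ₀, hψ₀⟩ := hΦne
  have hsmall : ∀ n : ℕ, ∃ χ ∈ Φ, ∀ i, ∫⁻ x, ENNReal.ofReal (χ x - φs x) ∂(μ i) ≤ (n : ℝ≥0∞)⁻¹ :=
    fun n => exists_mem_forall_lintegral_ofReal_sub_le μ htight hdir' hcont hglb hφscont hψ₀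
      (hUI ψ₀ (Set.mem_insert_of_mem _ hψ₀)) (hUI φs (Set.mem_insert _ _))
      (ENNReal.inv_pos.2 (ENNReal.natCast_ne_top n))
  choose χ hχΦ hχ using hsmall
  obtain ⟨φ, hφΦ, hanti, hφχ⟩ := hdir'.exists_antitone_le hχΦ
  refine ⟨φ, hφΦ, fun n => hanti n.le_succ, ?_⟩
  refine tendsto_of_tendsto_of_tendsto_of_le_of_le tendsto_const_nhds
    ENNReal.tendsto_inv_nat_nhds_zero (fun _ => zero_le) fun n => iSup_le fun i => ?_
  refine le_trans (lintegral_mono fun x => ?_) (hχ n i)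
  exact ENNReal.ofReal_le_ofReal (sub_le_sub_right (hφχ n x) _)

/-- For a uniformly tight family `(μ i)` of Borel probability measures on a metric space and
a nonempty downward-directed family `Φ` of continuous functions with real-valued continuous
pointwise infimum `φs`, such that every `ψ ∈ Φ ∪ {φs}` is uniformly integrable with respect to
the family `(μ i)`, there is a pointwise decreasing sequence `(φ n)` in `Φ` with
`sup_i ∫ (φ n - φs) dμ_i → 0`. -/
theorem stmt3 {E : Type*} [MetricSpace E] [MeasurableSpace E] [BorelSpace E]
    {I : Type*} [Nonempty I]
    (μ : I → Measure E) [∀ i, IsProbabilityMeasure (μ i)]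
    (htight : ∀ ε : ENNReal, 0 < ε → ∃ K : Set E, IsCompact K ∧ ⨆ i, μ i Kᶜ ≤ ε)
    (Φ : Set (E → ℝ)) (hΦne : Φ.Nonempty)
    (hcont : ∀ φ ∈ Φ, Continuous φ)
    (hdir : ∀ φ ∈ Φ, ∀ ψ ∈ Φ, ∃ χ ∈ Φ, ∀ x, χ x ≤ min (φ x) (ψ x))
    (φs : E → ℝ) (hglb : ∀ x, IsGLB ((fun φ : E → ℝ => φ x) '' Φ) (φs x))
    (hφscont : Continuous φs)
    (hUI : ∀ ψ ∈ insert φs Φ,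
      Tendsto (fun c : ℝ =>
          ⨆ i, ∫⁻ x in {x | c ≤ |ψ x|}, ENNReal.ofReal |ψ x| ∂(μ i)) atTop (nhds 0)) :
    ∃ φ : ℕ → E → ℝ, (∀ n, φ n ∈ Φ) ∧ (∀ n x, φ (n + 1) x ≤ φ n x) ∧
      Tendsto (fun n => ⨆ i, ∫⁻ x, ENNReal.ofReal (φ n x - φs x) ∂(μ i)) atTop (nhds 0) :=
  stmt3_general μ htight Φ hΦne hcont hdir φs hglb hφscont hUI
end
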